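/- For all indices 1 ≤ i, j ≤ ℓ and all integers n, m, the quantum affine raising–raising relation holds mode-wise: E_i^{(n+1)}∘E_j^{(m)} − q_i^{a_{ij}}·E_i^{(n)}∘E_j^{(m+1)} = q_i^{a_{ij}}·E_j^{(m)}∘E_i^{(n+1)} − E_j^{(m+1)}∘E_i^{(n)}, as an identity of ℂ(s)-linear endomorphisms of F (this is the coefficient of z^{−n}w^{−m} in the relation (z − q_i^{a_{ij}}w)E_i(z)E_j(w) = (q_i^{a_{ij}}z − w)E_j(w)E_i(z)). -/

import Mathlib

open MvPolynomial Finset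

set_option synthInstance.maxHeartbeats 1000000
set_option maxHeartbeats 1000000

noncomputable section

/-- The base field `ℂ(s)`. -/
abbrev K0 := RatFunc ℂ

/-- The variables. -/
abbrev Var (ℓ : ℕ) (m l : Fin ℓ → ℕ) := ((i : Fin ℓ) × Fin (m i)) ⊕ ((i : Fin ℓ) × Fin (l i))

/-- The rational function field over `ℂ(s)` in the given variables. -/
abbrev FF (ℓ : ℕ) (m l : Fin ℓ → ℕ) := FractionRing (MvPolynomial (Var ℓ m l) K0)

variable (ℓ : ℕ) (m l : Fin ℓ → ℕ) (d : Fin ℓ → ℕ) (a : Fin ℓ → Fin ℓ → ℤ)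

def cstHom : K0 →+* FF ℓ m l :=
  (algebraMap (MvPolynomial (Var ℓ m l) K0) (FF ℓ m l)).comp
    (C : K0 →+* MvPolynomial (Var ℓ m l) K0)

def cst (c : K0) : FF ℓ m l := cstHom ℓ m l c

/-- The variable `V_{i,k}`. -/
def V (i : Fin ℓ) (k : Fin (m i)) : FF ℓ m l :=
  algebraMap (MvPolynomial (Var ℓ m l) K0) (FF ℓ m l) (X (Sum.inl ⟨i, k⟩))

/-- The variable `W_{i,t}`. -/
def W (i : Fin ℓ) (t : Fin (l i)) : FF ℓ m l :=
  algebraMap (MvPolynomial (Var ℓ m l) K0) (FF ℓ m l) (X (Sum.inr ⟨i, t⟩))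

/-- `s ∈ ℂ(s)`. -/
def sElt : K0 := RatFunc.X

/-- `q = s²`. -/
def qElt : K0 := RatFunc.X ^ 2

/-- `q^e` for an integer exponent `e`. -/
def qz (e : ℤ) : K0 := qElt ^ e

/-- `q_i^e = q^{d_i·e}`. -/
def qiz (i : Fin ℓ) (e : ℤ) : K0 := qElt ^ ((d i : ℤ) * e)

/-- `q_i − q_i⁻¹`. -/
def qdiff (i : Fin ℓ) : K0 := qiz ℓ d i 1 - qiz ℓ d i (-1)

/-- `c_i = s^{Σ_j d_j·m_j·a_{ji}}`. -/
def cElt (i : Fin ℓ) : K0 := sElt ^ (∑ j : Fin ℓ, (d j : ℤ) * (m j : ℤ) * a j i)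

/-- The algebra automorphism of the polynomial ring rescaling the variable `w` by the
nonzero constant `c` and fixing all other variables. -/
def scalePoly (c : K0) (hc : c ≠ 0) (w : Var ℓ m l) :
    MvPolynomial (Var ℓ m l) K0 ≃ₐ[K0] MvPolynomial (Var ℓ m l) K0 :=
  AlgEquiv.ofAlgHom
    (aeval (fun j => if j = w then MvPolynomial.C c * X j else X j))
    (aeval (fun j => if j = w then MvPolynomial.C c⁻¹ * X j else X j))
    (by
      apply MvPolynomial.algHom_ext; intro j
      by_cases h : j = w <;>
        simp [h, ← mul_assoc, ← C_mul, mul_inv_cancel₀ hc, inv_mul_cancel₀ hc])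
    (by
      apply MvPolynomial.algHom_ext; intro j
      by_cases h : j = w <;>
        simp [h, ← mul_assoc, ← C_mul, mul_inv_cancel₀ hc, inv_mul_cancel₀ hc])

/-- The induced automorphism of `F`. -/
def scaleField (c : K0) (hc : c ≠ 0) (w : Var ℓ m l) : FF ℓ m l ≃+* FF ℓ m l :=
  IsFractionRing.ringEquivOfRingEquiv (scalePoly ℓ m l c hc w).toRingEquiv

/-- `u_{i,k}` : the automorphism `V_{i,k} ↦ q^{d_i}·V_{i,k}`. -/
def uik (i : Fin ℓ) (k : Fin (m i)) : FF ℓ m l ≃+* FF ℓ m l :=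
  scaleField ℓ m l (qElt ^ (d i)) (pow_ne_zero _ (pow_ne_zero _ RatFunc.X_ne_zero))
    (Sum.inl ⟨i, k⟩)

/-- The field `ℂ(s)({W_{i,t}})` of rational functions in the `W`-variables only:
the coefficient field for the polynomials `R_i^{(±)}`. -/
abbrev WField := FractionRing (MvPolynomial ((i : Fin ℓ) × Fin (l i)) K0)

/-- `W_{i,t}` as an element of `ℂ(s)({W_{i,t}})`. -/
def Wsmall (i : Fin ℓ) (t : Fin (l i)) : WField ℓ l :=
  algebraMap (MvPolynomial ((i : Fin ℓ) × Fin (l i)) K0) (WField ℓ l) (X ⟨i, t⟩)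

/-- The natural embedding `ℂ(s)({W_{i,t}}) ↪ F`. -/
def wEmb : WField ℓ l →+* FF ℓ m l :=
  IsFractionRing.lift (g :=
    ((algebraMap (MvPolynomial (Var ℓ m l) K0) (FF ℓ m l)).comp
      (rename (Sum.inr : ((i : Fin ℓ) × Fin (l i)) → Var ℓ m l)).toRingHom))
    ((IsFractionRing.injective (MvPolynomial (Var ℓ m l) K0) (FF ℓ m l)).comp
      (rename_injective _ Sum.inr_injective))

/-- Evaluation of a polynomial with coefficients in `ℂ(s)({W_{i,t}})` at a point of `F`. -/
def Rval (P : Polynomial (WField ℓ l)) (x : FF ℓ m l) : FF ℓ m l :=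
  Polynomial.eval₂ (wEmb ℓ m l) x P

/-- The mode operator `E_i^{(n)}`. -/
def Enop (Rp : (i : Fin ℓ) → Polynomial (WField ℓ l)) (i : Fin ℓ) (n : ℤ) :
    FF ℓ m l → FF ℓ m l := fun f =>
  cst ℓ m l (cElt ℓ m d a i / qdiff ℓ d i) * (∏ p : Fin (m i), V ℓ m l i p) *
    (∏ j ∈ univ.filter (fun j => i < j), ∏ p : Fin (m j), (V ℓ m l j p) ^ (a j i)) *
    ∑ k : Fin (m i),
      ((V ℓ m l i k) ^ (2 * n - 2) * Rval ℓ m l (Rp i) ((V ℓ m l i k) ^ 2) *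
        (∏ j ∈ univ.filter (fun j => i < j), ∏ r ∈ range (-(a j i)).toNat, ∏ p : Fin (m j),
          ((V ℓ m l i k) ^ 2
            - cst ℓ m l (qz ((d j : ℤ) * (a j i + 2 * ((r : ℤ) + 1)))) * (V ℓ m l j p) ^ 2)) /
        (∏ p ∈ univ.erase k, ((V ℓ m l i k) ^ 2 - (V ℓ m l i p) ^ 2))) *
      (uik ℓ m l d i k).symm f

/-!
Write `σ_{i,k} = u_{i,k}⁻¹`. Each mode operator is a sum of multiplication-shift operators,
`E_i^{(n)} f = ∑_k Φ_{i,k}(n) · σ_{i,k} f` with `Φ_{i,k}(n+1) = V_{i,k}² Φ_{i,k}(n)` (`Ecoeff`),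
and the shifts commute. Expanding both sides as double sums over `(k, t)`, the relation holds
term by term; with `x = V_{i,k}²`, `y = V_{j,t}²`, `Q = q_i^{a_{ij}}` a single term reduces to
`Φ_{i,k} σ_{i,k}(Φ_{j,t}) (x - Q σ_{i,k} y) = Φ_{j,t} σ_{j,t}(Φ_{i,k}) (Q σ_{j,t} x - y)`.
This only needs how one shift rescales a coefficient (`R_i` and the `W`'s are inert):
* for `i < j`, `σ_{i,k}` fixes `Φ_{j,t}`, which involves only variables of index `≥ j`, while
  `σ_{j,t}` multiplies `Φ_{i,k}` by `q_j^{-a_{ji}}` (from `V_{j,t}^{a_{ji}}`) and by the ratio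
  `(x - q_j^{a_{ji}} y) / (x - q_j^{-a_{ji}} y)`, to which the product over `r` telescopes;
* for `i = j`, `k ≠ t`, the factor `V_{i,k}` of `∏_p V_{i,p}` and the denominator `∏_{p ≠ t}`
  make `σ_{i,k}` multiply `Φ_{i,t}` by `q_i^{-1} (y - x) / (y - q_i^{-2} x)`;
* for `(i, k) = (j, t)` both sides vanish, since `q_i² σ_{i,k}(x) = x`;
* `j < i` is the case `i < j` with the roles exchanged, as `d_i a_{ij} = d_j a_{ji}`.
-/

section Scaling
variable {ℓ : ℕ} {m l : Fin ℓ → ℕ}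

lemma scalePoly_X (c : K0) (hc : c ≠ 0) (w v : Var ℓ m l) :
    scalePoly ℓ m l c hc w (X v) = if v = w then C c * X v else X v := by
  simp [scalePoly]

lemma scalePoly_C (c : K0) (hc : c ≠ 0) (w : Var ℓ m l) (x : K0) :
    scalePoly ℓ m l c hc w (C x) = C x :=
  (scalePoly ℓ m l c hc w).commutes x

lemma scalePoly_symm (c : K0) (hc : c ≠ 0) (w : Var ℓ m l) :
    (scalePoly ℓ m l c hc w).symm = scalePoly ℓ m l c⁻¹ (inv_ne_zero hc) w := by
  refine AlgEquiv.coe_toAlgHom_injective (MvPolynomial.algHom_ext fun v => ?_)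
  simp [scalePoly, AlgEquiv.ofAlgHom_symm_apply]

lemma scalePoly_comm (c₁ c₂ : K0) (h₁ : c₁ ≠ 0) (h₂ : c₂ ≠ 0) (w₁ w₂ : Var ℓ m l) :
    (scalePoly ℓ m l c₁ h₁ w₁).trans (scalePoly ℓ m l c₂ h₂ w₂)
      = (scalePoly ℓ m l c₂ h₂ w₂).trans (scalePoly ℓ m l c₁ h₁ w₁) := by
  refine AlgEquiv.coe_toAlgHom_injective (MvPolynomial.algHom_ext fun v => ?_)
  by_cases e₁ : v = w₁ <;> by_cases e₂ : v = w₂ <;> (try subst e₁) <;> (try subst e₂) <;>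
    simp [scalePoly_X, scalePoly_C, *, mul_left_comm]

lemma scaleField_algebraMap (c : K0) (hc : c ≠ 0) (w : Var ℓ m l)
    (p : MvPolynomial (Var ℓ m l) K0) :
    scaleField ℓ m l c hc w (algebraMap _ _ p) = algebraMap _ _ (scalePoly ℓ m l c hc w p) :=
  IsFractionRing.ringEquivOfRingEquiv_algebraMap _ _

lemma scaleField_symm (c : K0) (hc : c ≠ 0) (w : Var ℓ m l) :
    (scaleField ℓ m l c hc w).symm = scaleField ℓ m l c⁻¹ (inv_ne_zero hc) w := by
  rw [scaleField, IsFractionRing.ringEquivOfRingEquiv_symm, scaleField, ← scalePoly_symm]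
  rfl

lemma scaleField_comm (c₁ c₂ : K0) (h₁ : c₁ ≠ 0) (h₂ : c₂ ≠ 0) (w₁ w₂ : Var ℓ m l)
    (f : FF ℓ m l) :
    scaleField ℓ m l c₁ h₁ w₁ (scaleField ℓ m l c₂ h₂ w₂ f)
      = scaleField ℓ m l c₂ h₂ w₂ (scaleField ℓ m l c₁ h₁ w₁ f) := by
  suffices (scaleField ℓ m l c₁ h₁ w₁).toRingHom.comp (scaleField ℓ m l c₂ h₂ w₂).toRingHom
      = (scaleField ℓ m l c₂ h₂ w₂).toRingHom.comp (scaleField ℓ m l c₁ h₁ w₁).toRingHom from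
    RingHom.congr_fun this f
  refine IsLocalization.ringHom_ext (nonZeroDivisors (MvPolynomial (Var ℓ m l) K0))
    (RingHom.ext fun p => ?_)
  simp only [RingHom.comp_apply, RingEquiv.toRingHom_eq_coe, RingEquiv.coe_toRingHom,
    scaleField_algebraMap]
  exact congrArg _ (AlgEquiv.congr_fun (scalePoly_comm c₂ c₁ h₂ h₁ w₂ w₁) p)

lemma scaleField_cst (c : K0) (hc : c ≠ 0) (w : Var ℓ m l) (x : K0) :
    scaleField ℓ m l c hc w (cst ℓ m l x) = cst ℓ m l x := by
  rw [cst, cstHom, RingHom.comp_apply, scaleField_algebraMap, scalePoly_C]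

lemma scaleField_V (c : K0) (hc : c ≠ 0) (i : Fin ℓ) (k : Fin (m i)) (j : Fin ℓ)
    (p : Fin (m j)) :
    scaleField ℓ m l c hc (Sum.inl ⟨i, k⟩) (V ℓ m l j p)
      = if (⟨j, p⟩ : (i : Fin ℓ) × Fin (m i)) = ⟨i, k⟩ then cst ℓ m l c * V ℓ m l j p
        else V ℓ m l j p := by
  rw [V, scaleField_algebraMap, scalePoly_X]
  split_ifs with h₁ h₂ h₂
  · simp [cst, cstHom]
  · exact absurd (Sum.inl_injective h₁) h₂
  · exact absurd (congrArg Sum.inl h₂) h₁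
  · rfl

lemma wEmb_algebraMap (p : MvPolynomial ((i : Fin ℓ) × Fin (l i)) K0) :
    wEmb ℓ m l (algebraMap _ (WField ℓ l) p)
      = algebraMap (MvPolynomial (Var ℓ m l) K0) (FF ℓ m l) (rename Sum.inr p) :=
  IsFractionRing.lift_algebraMap _ _

lemma scaleField_wEmb (c : K0) (hc : c ≠ 0) (i : Fin ℓ) (k : Fin (m i)) (x : WField ℓ l) :
    scaleField ℓ m l c hc (Sum.inl ⟨i, k⟩) (wEmb ℓ m l x) = wEmb ℓ m l x := by
  suffices ((scaleField ℓ m l c hc (Sum.inl ⟨i, k⟩)).toRingHom.comp (wEmb ℓ m l))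
      = wEmb ℓ m l from RingHom.congr_fun this x
  refine IsLocalization.ringHom_ext
    (nonZeroDivisors (MvPolynomial ((i : Fin ℓ) × Fin (l i)) K0)) (RingHom.ext fun p => ?_)
  suffices (scalePoly ℓ m l c hc (Sum.inl ⟨i, k⟩)).toAlgHom.comp (rename Sum.inr)
      = rename Sum.inr by
    simp only [RingHom.comp_apply, RingEquiv.toRingHom_eq_coe, RingEquiv.coe_toRingHom,
      wEmb_algebraMap, scaleField_algebraMap]
    exact congrArg _ (AlgHom.congr_fun this p)
  exact MvPolynomial.algHom_ext fun v => by simp [scalePoly_X]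

lemma scaleField_Rval (c : K0) (hc : c ≠ 0) (i : Fin ℓ) (k : Fin (m i))
    (P : Polynomial (WField ℓ l)) (x : FF ℓ m l) :
    scaleField ℓ m l c hc (Sum.inl ⟨i, k⟩) (Rval ℓ m l P x)
      = Rval ℓ m l P (scaleField ℓ m l c hc (Sum.inl ⟨i, k⟩) x) := by
  rw [Rval, Rval, ← RingEquiv.coe_toRingHom, Polynomial.hom_eval₂]
  congr 1
  exact RingHom.ext (scaleField_wEmb c hc i k)

end Scaling

section QPowers
variable {ℓ : ℕ} {m l : Fin ℓ → ℕ}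

lemma qElt_ne_zero : qElt ≠ 0 := pow_ne_zero _ RatFunc.X_ne_zero

lemma qiz_eq_qz (d : Fin ℓ → ℕ) (i : Fin ℓ) (e : ℤ) : qiz ℓ d i e = qz ((d i : ℤ) * e) := rfl

lemma cst_qz_add (e e' : ℤ) :
    cst ℓ m l (qz (e + e')) = cst ℓ m l (qz e) * cst ℓ m l (qz e') := by
  rw [qz, zpow_add₀ qElt_ne_zero, cst, map_mul]
  rfl

lemma cst_qz_mul_cst_qz_of_add_eq_zero {e e' : ℤ} (h : e + e' = 0) :
    cst ℓ m l (qz e) * cst ℓ m l (qz e') = 1 := by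
  rw [← cst_qz_add, h, qz, zpow_zero, cst, map_one]

end QPowers

section Shift
variable {ℓ : ℕ} {m l : Fin ℓ → ℕ} (d : Fin ℓ → ℕ)

lemma uik_symm_cst (i : Fin ℓ) (k : Fin (m i)) (x : K0) :
    (uik ℓ m l d i k).symm (cst ℓ m l x) = cst ℓ m l x := by
  rw [uik, scaleField_symm, scaleField_cst]

lemma uik_symm_V_self (i : Fin ℓ) (k : Fin (m i)) :
    (uik ℓ m l d i k).symm (V ℓ m l i k) = cst ℓ m l (qz (-(d i : ℤ))) * V ℓ m l i k := by
  rw [uik, scaleField_symm, scaleField_V, if_pos rfl, qz, qElt, zpow_neg, zpow_natCast]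

lemma uik_symm_V_of_ne (i : Fin ℓ) (k : Fin (m i)) (j : Fin ℓ) (p : Fin (m j))
    (h : (⟨j, p⟩ : (i : Fin ℓ) × Fin (m i)) ≠ ⟨i, k⟩) :
    (uik ℓ m l d i k).symm (V ℓ m l j p) = V ℓ m l j p := by
  rw [uik, scaleField_symm, scaleField_V, if_neg h]

lemma uik_symm_Rval (i : Fin ℓ) (k : Fin (m i)) (P : Polynomial (WField ℓ l))
    (x : FF ℓ m l) :
    (uik ℓ m l d i k).symm (Rval ℓ m l P x) = Rval ℓ m l P ((uik ℓ m l d i k).symm x) := by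
  rw [uik, scaleField_symm, scaleField_Rval]

lemma uik_symm_comm (i j : Fin ℓ) (k : Fin (m i)) (t : Fin (m j)) (f : FF ℓ m l) :
    (uik ℓ m l d i k).symm ((uik ℓ m l d j t).symm f)
      = (uik ℓ m l d j t).symm ((uik ℓ m l d i k).symm f) := by
  simp only [uik, scaleField_symm, scaleField_comm]

end Shift

section Products
variable {ι M F : Type*} [CommMonoid M] [FunLike F M M] [MonoidHomClass F M M]

lemma map_prod_mul_eq_of_forall_ne (σ : F) {s : Finset ι} {g : ι → M} {a : ι} (ha : a ∈ s)
    (hfix : ∀ b ∈ s, b ≠ a → σ (g b) = g b) {u v : M} (h : σ (g a) * u = g a * v) :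
    σ (∏ b ∈ s, g b) * u = (∏ b ∈ s, g b) * v := by
  classical
  rw [← mul_prod_erase s g ha, map_mul, map_prod,
    prod_congr rfl fun b hb => hfix b (mem_of_mem_erase hb) (ne_of_mem_erase hb),
    mul_right_comm, h, mul_right_comm]

lemma map_prod_range_shift_mul (σ : F) (f : ℕ → M) (hf : ∀ r, σ (f (r + 1)) = f r) (N : ℕ) :
    σ (∏ r ∈ range N, f (r + 1)) * f N = (∏ r ∈ range N, f (r + 1)) * f 0 := by
  rw [map_prod, prod_congr rfl fun r _ => hf r, ← prod_range_succ, prod_range_succ']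

end Products

def prodV (b : Fin ℓ) : FF ℓ m l := ∏ p : Fin (m b), V ℓ m l b p

def prodVPowAbove (b : Fin ℓ) : FF ℓ m l :=
  ∏ j ∈ univ.filter (fun j => b < j), ∏ p : Fin (m j), V ℓ m l j p ^ a j b

def numerProd (b : Fin ℓ) (c : Fin (m b)) : FF ℓ m l :=
  ∏ j ∈ univ.filter (fun j => b < j), ∏ r ∈ range (-(a j b)).toNat, ∏ p : Fin (m j),
    (V ℓ m l b c ^ 2
      - cst ℓ m l (qz ((d j : ℤ) * (a j b + 2 * ((r : ℤ) + 1)))) * V ℓ m l j p ^ 2)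

def denomProd (b : Fin ℓ) (c : Fin (m b)) : FF ℓ m l :=
  ∏ p ∈ univ.erase c, (V ℓ m l b c ^ 2 - V ℓ m l b p ^ 2)

def Ecoeff (Rp : (i : Fin ℓ) → Polynomial (WField ℓ l)) (b : Fin ℓ) (c : Fin (m b)) (n : ℤ) :
    FF ℓ m l :=
  cst ℓ m l (cElt ℓ m d a b / qdiff ℓ d b) * prodV ℓ m l b * prodVPowAbove ℓ m l a b *
    (V ℓ m l b c ^ (2 * n - 2) * Rval ℓ m l (Rp b) (V ℓ m l b c ^ 2)
      * numerProd ℓ m l d a b c / denomProd ℓ m l b c)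

section Coefficients
variable {ℓ : ℕ} {m l : Fin ℓ → ℕ} {d : Fin ℓ → ℕ} {a : Fin ℓ → Fin ℓ → ℤ}
  {Rp : (i : Fin ℓ) → Polynomial (WField ℓ l)}

lemma Enop_apply (i : Fin ℓ) (n : ℤ) (f : FF ℓ m l) :
    Enop ℓ m l d a Rp i n f
      = ∑ k : Fin (m i), Ecoeff ℓ m l d a Rp i k n * (uik ℓ m l d i k).symm f := by
  rw [Enop, mul_sum]
  refine sum_congr rfl fun k _ => ?_
  rw [Ecoeff, prodV, prodVPowAbove, numerProd, denomProd]
  ring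

lemma V_ne_zero (i : Fin ℓ) (k : Fin (m i)) : V ℓ m l i k ≠ 0 :=
  (map_ne_zero_iff _ (IsFractionRing.injective _ _)).2 (X_ne_zero _)

lemma V_sq_sub_V_sq_ne_zero {i j : Fin ℓ} {k : Fin (m i)} {p : Fin (m j)}
    (h : (⟨i, k⟩ : (i : Fin ℓ) × Fin (m i)) ≠ ⟨j, p⟩) :
    V ℓ m l i k ^ 2 - V ℓ m l j p ^ 2 ≠ 0 := by
  have hv : (Sum.inl ⟨i, k⟩ : Var ℓ m l) ≠ Sum.inl ⟨j, p⟩ := fun e => h (Sum.inl_injective e)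
  have hpoly : (X (Sum.inl ⟨i, k⟩) ^ 2 - X (Sum.inl ⟨j, p⟩) ^ 2
      : MvPolynomial (Var ℓ m l) K0) ≠ 0 := by
    intro h0
    have := congrArg (coeff (Finsupp.single (Sum.inl ⟨i, k⟩) 2)) h0
    rw [coeff_sub, coeff_X_pow, coeff_X_pow, if_pos rfl,
      if_neg fun e => hv (Finsupp.single_left_injective two_ne_zero e.symm)] at this
    simp at this
  convert (map_ne_zero_iff _ (IsFractionRing.injective _ (FF ℓ m l))).2 hpoly using 1
  simp [V]

lemma denomProd_ne_zero (b : Fin ℓ) (c : Fin (m b)) : denomProd ℓ m l b c ≠ 0 :=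
  prod_ne_zero_iff.2 fun p hp =>
    V_sq_sub_V_sq_ne_zero (by simpa using (ne_of_mem_erase hp).symm)

lemma Ecoeff_add_one (b : Fin ℓ) (c : Fin (m b)) (n : ℤ) :
    Ecoeff ℓ m l d a Rp b c (n + 1) = V ℓ m l b c ^ 2 * Ecoeff ℓ m l d a Rp b c n := by
  rw [Ecoeff, Ecoeff, show 2 * (n + 1) - 2 = (2 * n - 2) + ((2 : ℕ) : ℤ) by push_cast; ring,
    zpow_add₀ (V_ne_zero b c), zpow_natCast]
  ring

end Coefficients

section Transformation
variable {ℓ : ℕ} {m l : Fin ℓ → ℕ} {d : Fin ℓ → ℕ} {a : Fin ℓ → Fin ℓ → ℤ}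
  {Rp : (i : Fin ℓ) → Polynomial (WField ℓ l)}

lemma uik_symm_prodV_of_ne {i b : Fin ℓ} (k : Fin (m i)) (h : b ≠ i) :
    (uik ℓ m l d i k).symm (prodV ℓ m l b) = prodV ℓ m l b := by
  rw [prodV, map_prod]
  exact prod_congr rfl fun p _ => uik_symm_V_of_ne d i k b p (by simp [h])

lemma uik_symm_prodV_self (i : Fin ℓ) (k : Fin (m i)) :
    (uik ℓ m l d i k).symm (prodV ℓ m l i) = cst ℓ m l (qz (-(d i : ℤ))) * prodV ℓ m l i := by
  have := map_prod_mul_eq_of_forall_ne (uik ℓ m l d i k).symm (mem_univ k) (u := 1)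
    (fun p _ hp => uik_symm_V_of_ne d i k i p (by simpa using hp))
    (by rw [uik_symm_V_self, mul_one, mul_comm])
  exact (mul_one _).symm.trans (this.trans (mul_comm _ _))

lemma uik_symm_prodVPowAbove_of_le {i b : Fin ℓ} (k : Fin (m i)) (h : i ≤ b) :
    (uik ℓ m l d i k).symm (prodVPowAbove ℓ m l a b) = prodVPowAbove ℓ m l a b := by
  rw [prodVPowAbove, map_prod]
  refine prod_congr rfl fun j hj => ?_
  have hji : j ≠ i := ((mem_filter.1 hj).2.trans_le' h).ne'
  rw [map_prod]
  exact prod_congr rfl fun p _ => by rw [map_zpow₀, uik_symm_V_of_ne d i k j p (by simp [hji])]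

lemma uik_symm_prodVPowAbove_mul {i j : Fin ℓ} (hij : i < j) (t : Fin (m j)) :
    (uik ℓ m l d j t).symm (prodVPowAbove ℓ m l a i) * cst ℓ m l (qz ((d j : ℤ) * a j i))
      = prodVPowAbove ℓ m l a i := by
  rw [prodVPowAbove]
  refine (map_prod_mul_eq_of_forall_ne _ (mem_filter.2 ⟨mem_univ j, hij⟩)
    (fun j' _ hj' => ?_) ?_).trans (mul_one _)
  · rw [map_prod]
    exact prod_congr rfl fun p _ => by
      rw [map_zpow₀, uik_symm_V_of_ne d j t j' p (by simp [hj'])]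
  · refine map_prod_mul_eq_of_forall_ne _ (mem_univ t)
      (fun p _ hp => by rw [map_zpow₀, uik_symm_V_of_ne d j t j p (by simpa using hp)]) ?_
    rw [map_zpow₀, uik_symm_V_self, mul_zpow, cst, ← map_zpow₀, qz, ← zpow_mul, ← cst, ← qz,
      mul_right_comm, mul_one, cst_qz_mul_cst_qz_of_add_eq_zero (by ring), one_mul]

lemma uik_symm_numerProd_of_le {i b : Fin ℓ} (k : Fin (m i)) (c : Fin (m b)) (h : i ≤ b)
    (hc : (⟨b, c⟩ : (i : Fin ℓ) × Fin (m i)) ≠ ⟨i, k⟩) :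
    (uik ℓ m l d i k).symm (numerProd ℓ m l d a b c) = numerProd ℓ m l d a b c := by
  simp only [numerProd, map_prod]
  refine prod_congr rfl fun j hj => prod_congr rfl fun r _ => prod_congr rfl fun p _ => ?_
  have hji : j ≠ i := ((mem_filter.1 hj).2.trans_le' h).ne'
  rw [map_sub, map_mul, map_pow, map_pow, uik_symm_cst, uik_symm_V_of_ne d i k b c hc,
    uik_symm_V_of_ne d i k j p (by simp [hji])]

lemma uik_symm_numerProd_mul {i j : Fin ℓ} (hij : i < j) (hji : a j i ≤ 0) (k : Fin (m i))
    (t : Fin (m j)) :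
    (uik ℓ m l d j t).symm (numerProd ℓ m l d a i k)
        * (V ℓ m l i k ^ 2 - cst ℓ m l (qz (-((d j : ℤ) * a j i))) * V ℓ m l j t ^ 2)
      = numerProd ℓ m l d a i k
        * (V ℓ m l i k ^ 2 - cst ℓ m l (qz ((d j : ℤ) * a j i)) * V ℓ m l j t ^ 2) := by
  have hx : (uik ℓ m l d j t).symm (V ℓ m l i k) = V ℓ m l i k :=
    uik_symm_V_of_ne d j t i k (by simp [hij.ne])
  rw [numerProd]
  refine map_prod_mul_eq_of_forall_ne _ (mem_filter.2 ⟨mem_univ j, hij⟩) (fun j' _ hj' => ?_) ?_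
  · simp only [map_prod]
    refine prod_congr rfl fun r _ => prod_congr rfl fun p _ => ?_
    rw [map_sub, map_mul, map_pow, map_pow, uik_symm_cst, hx,
      uik_symm_V_of_ne d j t j' p (by simp [hj'])]
  rw [prod_comm]
  refine map_prod_mul_eq_of_forall_ne _ (mem_univ t) (fun p _ hp => ?_) ?_
  · simp only [map_prod]
    refine prod_congr rfl fun r _ => ?_
    rw [map_sub, map_mul, map_pow, map_pow, uik_symm_cst, hx,
      uik_symm_V_of_ne d j t j p (by simpa using hp)]
  -- The shift sends the `r`-th factor to the `(r - 1)`-th, so the product telescopes;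
  -- the exponent at the top end `N = -a j i` is `a j i + 2 N = -a j i`.
  set f : ℕ → FF ℓ m l := fun r =>
    V ℓ m l i k ^ 2 - cst ℓ m l (qz ((d j : ℤ) * (a j i + 2 * (r : ℤ)))) * V ℓ m l j t ^ 2
  have hN : ((-(a j i)).toNat : ℤ) = -(a j i) := Int.toNat_of_nonneg (neg_nonneg.2 hji)
  have hf : ∀ r, (uik ℓ m l d j t).symm (f (r + 1)) = f r := fun r => by
    have hq : cst ℓ m l (qz ((d j : ℤ) * (a j i + 2 * ((r + 1 : ℕ) : ℤ))))
          * cst ℓ m l (qz (-(d j : ℤ))) ^ 2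
        = cst ℓ m l (qz ((d j : ℤ) * (a j i + 2 * (r : ℤ)))) := by
      rw [sq, ← mul_assoc, ← cst_qz_add, ← cst_qz_add]
      congr 2
      push_cast
      ring
    simp only [f, map_sub, map_mul, map_pow, uik_symm_cst, hx, uik_symm_V_self, mul_pow]
    rw [← mul_assoc, hq]
  have := map_prod_range_shift_mul (uik ℓ m l d j t).symm f hf (-(a j i)).toNat
  simp only [f, hN, Nat.cast_add, Nat.cast_one, Nat.cast_zero] at this
  convert this using 3 <;> ring_nf

lemma uik_symm_denomProd_of_ne {i b : Fin ℓ} (k : Fin (m i)) (c : Fin (m b)) (h : b ≠ i) :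
    (uik ℓ m l d i k).symm (denomProd ℓ m l b c) = denomProd ℓ m l b c := by
  rw [denomProd, map_prod]
  refine prod_congr rfl fun p _ => ?_
  rw [map_sub, map_pow, map_pow, uik_symm_V_of_ne d i k b c (by simp [h]),
    uik_symm_V_of_ne d i k b p (by simp [h])]

lemma uik_symm_denomProd_mul {i : Fin ℓ} {k t : Fin (m i)} (htk : t ≠ k) :
    (uik ℓ m l d i k).symm (denomProd ℓ m l i t) * (V ℓ m l i t ^ 2 - V ℓ m l i k ^ 2)
      = denomProd ℓ m l i t
        * (V ℓ m l i t ^ 2 - (cst ℓ m l (qz (-(d i : ℤ))) * V ℓ m l i k) ^ 2) := by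
  have ht : (uik ℓ m l d i k).symm (V ℓ m l i t) = V ℓ m l i t :=
    uik_symm_V_of_ne d i k i t (by simpa using htk)
  refine map_prod_mul_eq_of_forall_ne _ (mem_erase.2 ⟨htk.symm, mem_univ k⟩)
    (fun p _ hpk => ?_) ?_
  · rw [map_sub, map_pow, map_pow, ht, uik_symm_V_of_ne d i k i p (by simpa using hpk)]
  · rw [map_sub, map_pow, map_pow, ht, uik_symm_V_self, mul_comm]

lemma uik_symm_Ecoeff_of_lt {i j : Fin ℓ} (hij : i < j) (k : Fin (m i)) (t : Fin (m j))
    (n : ℤ) :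
    (uik ℓ m l d i k).symm (Ecoeff ℓ m l d a Rp j t n) = Ecoeff ℓ m l d a Rp j t n := by
  have ht : (⟨j, t⟩ : (i : Fin ℓ) × Fin (m i)) ≠ ⟨i, k⟩ := by simp [hij.ne']
  simp only [Ecoeff, map_mul, map_div₀, map_zpow₀, map_pow, uik_symm_cst, uik_symm_Rval,
    uik_symm_V_of_ne d i k j t ht, uik_symm_prodV_of_ne k hij.ne',
    uik_symm_prodVPowAbove_of_le k hij.le, uik_symm_numerProd_of_le k t hij.le ht,
    uik_symm_denomProd_of_ne k t hij.ne']

lemma uik_symm_Ecoeff_mul_of_lt {i j : Fin ℓ} (hij : i < j) (hji : a j i ≤ 0) (k : Fin (m i))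
    (t : Fin (m j)) (n : ℤ) :
    (uik ℓ m l d j t).symm (Ecoeff ℓ m l d a Rp i k n)
        * (cst ℓ m l (qz ((d j : ℤ) * a j i)) * V ℓ m l i k ^ 2 - V ℓ m l j t ^ 2)
      = Ecoeff ℓ m l d a Rp i k n
        * (V ℓ m l i k ^ 2 - cst ℓ m l (qz ((d j : ℤ) * a j i)) * V ℓ m l j t ^ 2) := by
  have hk : (⟨i, k⟩ : (i : Fin ℓ) × Fin (m i)) ≠ ⟨j, t⟩ := by simp [hij.ne]
  have hP := uik_symm_prodVPowAbove_mul (l := l) (d := d) (a := a) hij t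
  have hX := uik_symm_numerProd_mul (l := l) (d := d) hij hji k t
  have hQ := cst_qz_mul_cst_qz_of_add_eq_zero (ℓ := ℓ) (m := m) (l := l)
    (e := (d j : ℤ) * a j i) (e' := -((d j : ℤ) * a j i)) (by ring)
  simp only [Ecoeff, map_mul, map_div₀, map_zpow₀, map_pow, uik_symm_cst, uik_symm_Rval,
    uik_symm_V_of_ne d j t i k hk, uik_symm_prodV_of_ne t hij.ne,
    uik_symm_denomProd_of_ne t k hij.ne]
  linear_combination (cst ℓ m l (cElt ℓ m d a i / qdiff ℓ d i) * prodV ℓ m l i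
      * V ℓ m l i k ^ (2 * n - 2) * Rval ℓ m l (Rp i) (V ℓ m l i k ^ 2) / denomProd ℓ m l i k)
    * (prodVPowAbove ℓ m l a i * hX
      + (uik ℓ m l d j t).symm (numerProd ℓ m l d a i k)
        * (V ℓ m l i k ^ 2 - cst ℓ m l (qz (-((d j : ℤ) * a j i))) * V ℓ m l j t ^ 2) * hP
      + (uik ℓ m l d j t).symm (prodVPowAbove ℓ m l a i)
        * (uik ℓ m l d j t).symm (numerProd ℓ m l d a i k) * V ℓ m l j t ^ 2 * hQ)

lemma uik_symm_Ecoeff_mul_self {i : Fin ℓ} {k t : Fin (m i)} (htk : t ≠ k) (n : ℤ) :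
    (uik ℓ m l d i k).symm (Ecoeff ℓ m l d a Rp i t n)
        * (cst ℓ m l (qz ((d i : ℤ) * 2)) * V ℓ m l i t ^ 2 - V ℓ m l i k ^ 2)
      = cst ℓ m l (qz (d i)) * Ecoeff ℓ m l d a Rp i t n
        * (V ℓ m l i t ^ 2 - V ℓ m l i k ^ 2) := by
  have ht : (⟨i, t⟩ : (i : Fin ℓ) × Fin (m i)) ≠ ⟨i, k⟩ := by simpa using htk
  have hD := uik_symm_denomProd_mul (l := l) (d := d) htk
  have hD₀ : denomProd ℓ m l i t ≠ 0 := denomProd_ne_zero i t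
  have hσD₀ : (uik ℓ m l d i k).symm (denomProd ℓ m l i t) ≠ 0 := by simpa using hD₀
  have hqc := cst_qz_mul_cst_qz_of_add_eq_zero (ℓ := ℓ) (m := m) (l := l)
    (e := d i) (e' := -(d i : ℤ)) (by ring)
  have hQ : cst ℓ m l (qz ((d i : ℤ) * 2)) = cst ℓ m l (qz (d i)) * cst ℓ m l (qz (d i)) := by
    rw [← cst_qz_add, mul_two]
  simp only [Ecoeff, map_mul, map_div₀, map_zpow₀, map_pow, uik_symm_cst, uik_symm_Rval,
    uik_symm_V_of_ne d i k i t ht, uik_symm_prodV_self, uik_symm_prodVPowAbove_of_le k le_rfl,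
    uik_symm_numerProd_of_le k t le_rfl ht]
  field_simp
  linear_combination (cst ℓ m l (cElt ℓ m d a i / qdiff ℓ d i) * prodV ℓ m l i
      * prodVPowAbove ℓ m l a i * V ℓ m l i t ^ (2 * n - 2) * Rval ℓ m l (Rp i) (V ℓ m l i t ^ 2)
      * numerProd ℓ m l d a i t)
    * (-cst ℓ m l (qz (d i)) * hD
      + denomProd ℓ m l i t * cst ℓ m l (qz (-(d i : ℤ))) * V ℓ m l i t ^ 2 * hQ
      + denomProd ℓ m l i t * (cst ℓ m l (qz (d i)) * V ℓ m l i t ^ 2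
        + cst ℓ m l (qz (-(d i : ℤ))) * V ℓ m l i k ^ 2) * hqc)

end Transformation

lemma exchange_relation_of_reduced {R F : Type*} [CommRing R] [FunLike F R R]
    [RingHomClass F R R] (σ τ : F) {A A' B B' x y Q : R} (hA : A' = x * A) (hB : B' = y * B)
    (h : A * σ B * (x - Q * σ y) = B * τ A * (Q * τ x - y)) :
    A' * σ B - Q * (A * σ B') = Q * (B * τ A') - B' * τ A := by
  subst hA hB
  simp only [map_mul]
  linear_combination h

section Exchange
variable {ℓ : ℕ} {m l : Fin ℓ → ℕ} {d : Fin ℓ → ℕ} {a : Fin ℓ → Fin ℓ → ℤ}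
  {Rp : (i : Fin ℓ) → Polynomial (WField ℓ l)}

lemma Ecoeff_reduced_exchange_of_lt {i j : Fin ℓ} (hij : i < j) (hji : a j i ≤ 0)
    (k : Fin (m i)) (t : Fin (m j)) (n n' : ℤ) :
    Ecoeff ℓ m l d a Rp i k n * (uik ℓ m l d i k).symm (Ecoeff ℓ m l d a Rp j t n')
        * (V ℓ m l i k ^ 2
          - cst ℓ m l (qz ((d j : ℤ) * a j i)) * (uik ℓ m l d i k).symm (V ℓ m l j t ^ 2))
      = Ecoeff ℓ m l d a Rp j t n' * (uik ℓ m l d j t).symm (Ecoeff ℓ m l d a Rp i k n)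
        * (cst ℓ m l (qz ((d j : ℤ) * a j i)) * (uik ℓ m l d j t).symm (V ℓ m l i k ^ 2)
          - V ℓ m l j t ^ 2) := by
  rw [uik_symm_Ecoeff_of_lt hij, map_pow, map_pow,
    uik_symm_V_of_ne d i k j t (by simp [hij.ne']), uik_symm_V_of_ne d j t i k (by simp [hij.ne])]
  linear_combination (-Ecoeff ℓ m l d a Rp j t n') * uik_symm_Ecoeff_mul_of_lt hij hji k t n

lemma Ecoeff_reduced_exchange_self (i : Fin ℓ) (k : Fin (m i)) (n n' : ℤ) :
    Ecoeff ℓ m l d a Rp i k n * (uik ℓ m l d i k).symm (Ecoeff ℓ m l d a Rp i k n')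
        * (V ℓ m l i k ^ 2
          - cst ℓ m l (qz ((d i : ℤ) * 2)) * (uik ℓ m l d i k).symm (V ℓ m l i k ^ 2))
      = Ecoeff ℓ m l d a Rp i k n' * (uik ℓ m l d i k).symm (Ecoeff ℓ m l d a Rp i k n)
        * (cst ℓ m l (qz ((d i : ℤ) * 2)) * (uik ℓ m l d i k).symm (V ℓ m l i k ^ 2)
          - V ℓ m l i k ^ 2) := by
  have hq : cst ℓ m l (qz ((d i : ℤ) * 2)) * (uik ℓ m l d i k).symm (V ℓ m l i k ^ 2)
      = V ℓ m l i k ^ 2 := by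
    rw [map_pow, uik_symm_V_self, mul_pow, ← mul_assoc, sq (cst ℓ m l _), ← mul_assoc,
      ← cst_qz_add, ← cst_qz_add, show (d i : ℤ) * 2 + -(d i) + -(d i) = 0 by ring, qz,
      zpow_zero, cst, map_one, one_mul]
  simp only [hq, sub_self, mul_zero]

lemma Ecoeff_reduced_exchange_of_ne {i : Fin ℓ} {k t : Fin (m i)} (htk : t ≠ k) (n n' : ℤ) :
    Ecoeff ℓ m l d a Rp i k n * (uik ℓ m l d i k).symm (Ecoeff ℓ m l d a Rp i t n')
        * (V ℓ m l i k ^ 2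
          - cst ℓ m l (qz ((d i : ℤ) * 2)) * (uik ℓ m l d i k).symm (V ℓ m l i t ^ 2))
      = Ecoeff ℓ m l d a Rp i t n' * (uik ℓ m l d i t).symm (Ecoeff ℓ m l d a Rp i k n)
        * (cst ℓ m l (qz ((d i : ℤ) * 2)) * (uik ℓ m l d i t).symm (V ℓ m l i k ^ 2)
          - V ℓ m l i t ^ 2) := by
  rw [map_pow, map_pow, uik_symm_V_of_ne d i k i t (by simpa using htk),
    uik_symm_V_of_ne d i t i k (by simpa using htk.symm)]
  linear_combination -Ecoeff ℓ m l d a Rp i k n * uik_symm_Ecoeff_mul_self htk n'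
    - Ecoeff ℓ m l d a Rp i t n' * uik_symm_Ecoeff_mul_self htk.symm n

lemma Ecoeff_exchange (ha : ∀ i, a i i = 2) (ha' : ∀ i j, i ≠ j → a i j ≤ 0)
    (hsym : ∀ i j, (d i : ℤ) * a i j = (d j : ℤ) * a j i)
    (i j : Fin ℓ) (k : Fin (m i)) (t : Fin (m j)) (n n' : ℤ) :
    Ecoeff ℓ m l d a Rp i k (n + 1) * (uik ℓ m l d i k).symm (Ecoeff ℓ m l d a Rp j t n')
        - cst ℓ m l (qiz ℓ d i (a i j)) * (Ecoeff ℓ m l d a Rp i k n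
          * (uik ℓ m l d i k).symm (Ecoeff ℓ m l d a Rp j t (n' + 1)))
      = cst ℓ m l (qiz ℓ d i (a i j)) * (Ecoeff ℓ m l d a Rp j t n'
          * (uik ℓ m l d j t).symm (Ecoeff ℓ m l d a Rp i k (n + 1)))
        - Ecoeff ℓ m l d a Rp j t (n' + 1)
          * (uik ℓ m l d j t).symm (Ecoeff ℓ m l d a Rp i k n) := by
  refine exchange_relation_of_reduced _ _ (Ecoeff_add_one i k n) (Ecoeff_add_one j t n') ?_
  rw [qiz_eq_qz]
  rcases lt_trichotomy i j with hij | rfl | hji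
  · rw [hsym]
    exact Ecoeff_reduced_exchange_of_lt hij (ha' j i hij.ne') k t n n'
  · rw [ha]
    obtain rfl | htk := eq_or_ne t k
    · exact Ecoeff_reduced_exchange_self i t n n'
    · exact Ecoeff_reduced_exchange_of_ne htk n n'
  · linear_combination Ecoeff_reduced_exchange_of_lt (Rp := Rp) hji (ha' i j hji.ne') t k n' n

end Exchange

theorem qaffine_EE_general
    (ℓ : ℕ)
    (a : Fin ℓ → Fin ℓ → ℤ) (ha : ∀ i, a i i = 2) (ha' : ∀ i j, i ≠ j → a i j ≤ 0)
    (d : Fin ℓ → ℕ)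
    (hsym : ∀ i j, (d i : ℤ) * a i j = (d j : ℤ) * a j i)
    (m : Fin ℓ → ℕ)
    (l : Fin ℓ → ℕ)
    (Rp : (i : Fin ℓ) → Polynomial (WField ℓ l))
    (i j : Fin ℓ) (n n' : ℤ) :
    Enop ℓ m l d a Rp i (n + 1) ∘ Enop ℓ m l d a Rp j n'
        - cst ℓ m l (qiz ℓ d i (a i j)) • (Enop ℓ m l d a Rp i n ∘ Enop ℓ m l d a Rp j (n' + 1))
      = cst ℓ m l (qiz ℓ d i (a i j)) • (Enop ℓ m l d a Rp j n' ∘ Enop ℓ m l d a Rp i (n + 1))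
        - Enop ℓ m l d a Rp j (n' + 1) ∘ Enop ℓ m l d a Rp i n := by
  funext f
  simp only [Function.comp_apply, Pi.sub_apply, Pi.smul_apply, smul_eq_mul, Enop_apply, map_sum,
    map_mul, mul_sum, ← sum_sub_distrib]
  conv_rhs => rw [sum_comm]
  refine sum_congr rfl fun k _ => sum_congr rfl fun t _ => ?_
  rw [uik_symm_comm d j i t k f]
  linear_combination (uik ℓ m l d i k).symm ((uik ℓ m l d j t).symm f)
    * Ecoeff_exchange ha ha' hsym i j k t n n'

/-- the quantum affine raising–raising relation, mode-wise. -/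
theorem qaffine_EE
    (ℓ : ℕ) (hℓ : 1 ≤ ℓ)
    (a : Fin ℓ → Fin ℓ → ℤ) (ha : ∀ i, a i i = 2) (ha' : ∀ i j, i ≠ j → a i j ≤ 0)
    (d : Fin ℓ → ℕ) (hd : ∀ i, 0 < d i)
    (hsym : ∀ i j, (d i : ℤ) * a i j = (d j : ℤ) * a j i)
    (m : Fin ℓ → ℕ) (hm : ∀ i, 0 < m i)
    (l : Fin ℓ → ℕ) (hln : ∀ i, (l i : ℤ) = ∑ j, (m j : ℤ) * a j i)
    (Rp Rm : (i : Fin ℓ) → Polynomial (WField ℓ l))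
    (hR : ∀ i, Rp i * Rm i =
      ∏ t : Fin (l i), (Polynomial.X * Polynomial.C (Wsmall ℓ l i t)⁻¹
        - Polynomial.C (Wsmall ℓ l i t)))
    (i j : Fin ℓ) (n n' : ℤ) :
    Enop ℓ m l d a Rp i (n + 1) ∘ Enop ℓ m l d a Rp j n'
        - cst ℓ m l (qiz ℓ d i (a i j)) • (Enop ℓ m l d a Rp i n ∘ Enop ℓ m l d a Rp j (n' + 1))
      = cst ℓ m l (qiz ℓ d i (a i j)) • (Enop ℓ m l d a Rp j n' ∘ Enop ℓ m l d a Rp i (n + 1))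
        - Enop ℓ m l d a Rp j (n' + 1) ∘ Enop ℓ m l d a Rp i n :=
  qaffine_EE_general ℓ a ha ha' d hsym m l Rp i j n n'
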